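/- Let g, q : ℝ^d → ℝ be α-strongly convex functions with α > 0, and define f = g − q. Suppose a sequence (xₜ) satisfies: for each t, there exists yₜ that is simultaneously a subgradient of q at xₜ and a subgradient of g at x_{t+1}. Then f(xₜ) ≥ f(x_{t+1}) + α‖x_{t+1} − xₜ‖² for all t; in particular the sequence (f(xₜ)) is nonincreasing. -/

import Mathlib

/-!
Strong convexity improves the subgradient inequality by a quadratic term: if `y` is a subgradient
of an `α`-strongly convex `φ` at `a`, then `φ b ≥ φ a + ⟪b - a, y⟫ + α / 2 * ‖b - a‖ ^ 2`.
Applying this to `q` at `xₜ` and to `g` at `xₜ₊₁` with the same `yₜ` and adding, the linear terms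
cancel and the two quadratic terms add up to `α * ‖xₜ₊₁ - xₜ‖ ^ 2`.
-/

open Filter Set Topology

namespace StrongConvexOn

variable {E : Type*} [NormedAddCommGroup E] [NormedSpace ℝ E]
  {s : Set E} {m : ℝ} {φ : E → ℝ} {ℓ : E →ₗ[ℝ] ℝ} {a b : E}

theorem add_add_le_of_subgradient (hφ : StrongConvexOn s m φ) (ha : a ∈ s) (hb : b ∈ s)
    (hℓ : ∀ z ∈ s, φ a + ℓ (z - a) ≤ φ z) :
    φ a + ℓ (b - a) + m / 2 * ‖b - a‖ ^ 2 ≤ φ b := by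
  -- Strong convexity on the segment plus the subgradient inequality at `a + t • (b - a)`,
  -- divided by `t`; then let `t → 0⁺`.
  have hsegment :
      ∀ t ∈ Ioo (0 : ℝ) 1, φ a + ℓ (b - a) + (1 - t) * (m / 2 * ‖b - a‖ ^ 2) ≤ φ b := by
    rintro t ⟨ht0, ht1⟩
    have hconv := hφ.2 ha hb (sub_nonneg.2 ht1.le) ht0.le (sub_add_cancel 1 t)
    have hsub := hℓ _ (hφ.1 ha hb (sub_nonneg.2 ht1.le) ht0.le (sub_add_cancel 1 t))
    have hdir : (1 - t) • a + t • b - a = t • (b - a) := by module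
    rw [hdir, map_smul, smul_eq_mul] at hsub
    rw [smul_eq_mul, smul_eq_mul, norm_sub_rev] at hconv
    dsimp only at hconv
    have : t * (φ a + ℓ (b - a) + (1 - t) * (m / 2 * ‖b - a‖ ^ 2)) ≤ t * φ b := by linarith
    exact le_of_mul_le_mul_left this ht0
  have hlim : Tendsto (fun t : ℝ => φ a + ℓ (b - a) + (1 - t) * (m / 2 * ‖b - a‖ ^ 2)) (𝓝[>] 0)
      (𝓝 (φ a + ℓ (b - a) + m / 2 * ‖b - a‖ ^ 2)) :=
    ((Continuous.tendsto' (by fun_prop) 0 _ (by simp)).mono_left nhdsWithin_le_nhds)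
  exact le_of_tendsto hlim (eventually_of_mem (Ioo_mem_nhdsGT one_pos) hsegment)

theorem sub_add_mul_norm_sq_le_of_subgradient {g q : E → ℝ} {x x' : E}
    (hg : StrongConvexOn s m g) (hq : StrongConvexOn s m q) (hx : x ∈ s) (hx' : x' ∈ s)
    (hℓq : ∀ z ∈ s, q x + ℓ (z - x) ≤ q z) (hℓg : ∀ z ∈ s, g x' + ℓ (z - x') ≤ g z) :
    g x' - q x' + m * ‖x' - x‖ ^ 2 ≤ g x - q x := by
  have hq' := hq.add_add_le_of_subgradient hx hx' hℓq
  have hg' := hg.add_add_le_of_subgradient hx' hx hℓg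
  rw [← neg_sub x' x, map_neg, norm_neg] at hg'
  linarith

end StrongConvexOn

theorem stmt_5_general {d : ℕ} (g q : EuclideanSpace ℝ (Fin d) → ℝ) (α : ℝ)
    (hg : ConvexOn ℝ Set.univ (fun x => g x - (α / 2) * ‖x‖ ^ 2))
    (hq : ConvexOn ℝ Set.univ (fun x => q x - (α / 2) * ‖x‖ ^ 2))
    (f : EuclideanSpace ℝ (Fin d) → ℝ) (hf : ∀ x, f x = g x - q x)
    (x : ℕ → EuclideanSpace ℝ (Fin d))
    (hstep : ∀ t, ∃ y : EuclideanSpace ℝ (Fin d),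
      (∀ z, q (x t) + (inner ℝ (z - x t) y : ℝ) ≤ q z) ∧
      (∀ z, g (x (t + 1)) + (inner ℝ (z - x (t + 1)) y : ℝ) ≤ g z)) :
    ∀ t, f (x (t + 1)) + α * ‖x (t + 1) - x t‖ ^ 2 ≤ f (x t) := by
  intro t
  obtain ⟨y, hyq, hyg⟩ := hstep t
  rw [hf, hf]
  exact StrongConvexOn.sub_add_mul_norm_sq_le_of_subgradient (ℓ := (innerₗ _).flip y)
    (strongConvexOn_iff_convex.2 hg) (strongConvexOn_iff_convex.2 hq) (mem_univ _) (mem_univ _)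
    (fun z _ => hyq z) (fun z _ => hyg z)

theorem stmt_5 {d : ℕ} (g q : EuclideanSpace ℝ (Fin d) → ℝ) (α : ℝ) (hα : 0 < α)
    (hg : ConvexOn ℝ Set.univ (fun x => g x - (α / 2) * ‖x‖ ^ 2))
    (hq : ConvexOn ℝ Set.univ (fun x => q x - (α / 2) * ‖x‖ ^ 2))
    (f : EuclideanSpace ℝ (Fin d) → ℝ) (hf : ∀ x, f x = g x - q x)
    (x : ℕ → EuclideanSpace ℝ (Fin d))
    (hstep : ∀ t, ∃ y : EuclideanSpace ℝ (Fin d),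
      (∀ z, q (x t) + (inner ℝ (z - x t) y : ℝ) ≤ q z) ∧
      (∀ z, g (x (t + 1)) + (inner ℝ (z - x (t + 1)) y : ℝ) ≤ g z)) :
    ∀ t, f (x (t + 1)) + α * ‖x (t + 1) - x t‖ ^ 2 ≤ f (x t) :=
  stmt_5_general g q α hg hq f hf x hstep
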